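/- arXiv:0905.3197 — 2 statements merged into one kernel-verified Lean document; each statement's English description precedes it below -/
import Mathlib

section
/- Fix positive integers s and t, and suppose that π_{st}(G × H, (x, y)) ≤ π_s(G, x) · π_t(H, y) holds for all finite simple graphs G and H and all vertices x ∈ V(G), y ∈ V(H). Then π_{2st}(G × H, (x, y)) ≤ π_{2s}(G, x) · π_t(H, y) and π_{2st}(G × H, (x, y)) ≤ π_s(G, x) · π_{2t}(H, y) hold for all finite simple graphs G and H and all vertices x ∈ V(G), y ∈ V(H). -/
open scoped BigOperators

/-- A single pebbling move on a simple graph: remove two pebbles from `u`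
and add one pebble on an adjacent vertex `v`. -/
def PebMove {V : Type*} [DecidableEq V] (G : SimpleGraph V) (D D' : V → ℕ) : Prop :=
  ∃ u v, G.Adj u v ∧ 2 ≤ D u ∧
    D' = fun w => if w = u then D u - 2 else if w = v then D v + 1 else D w

/-- `D'` is reachable from `D`: some sequence of pebbling moves starting at `D`
produces a distribution containing `D'`. -/
def Reaches {V : Type*} [DecidableEq V] (G : SimpleGraph V) (D D' : V → ℕ) : Prop :=
  ∃ D'', Relation.ReflTransGen (PebMove G) D D'' ∧ ∀ v, D' v ≤ D'' v

/-- Total number of pebbles of a distribution. -/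
def pebTotal {V : Type*} [Fintype V] (D : V → ℕ) : ℕ := ∑ v, D v

/-- The pebbling number of a set `S` of target distributions on `G`:
the least `N` (possibly `∞`) such that every member of `S` is reachable from
every distribution with at least `N` pebbles in total. -/
noncomputable def pebSet {V : Type*} [Fintype V] [DecidableEq V] (G : SimpleGraph V)
    (S : Set (V → ℕ)) : ℕ∞ :=
  sInf {N : ℕ∞ | ∀ D₀ : V → ℕ, N ≤ (pebTotal D₀ : ℕ∞) → ∀ D ∈ S, Reaches G D₀ D}

/-- The pebbling number of a single target distribution. -/
noncomputable def peb {V : Type*} [Fintype V] [DecidableEq V] (G : SimpleGraph V)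
    (D : V → ℕ) : ℕ∞ :=
  pebSet G {D}

/-- The distribution with `t` pebbles on `v` and none elsewhere. -/
def unitDist {V : Type*} [DecidableEq V] (t : ℕ) (v : V) : V → ℕ :=
  fun w => if w = v then t else 0

/-!
Attach a pendant vertex `⋆` (here `none : Option V`) to `x`. A pebble on `⋆` is worth two
pebbles on `x`: folding the `⋆`-column of `G⁺ □ H` onto the `x`-column of `G □ H` turns every
pebbling move into at most two moves, so `π_{2m}(G □ H, (x, y)) ≤ π_m(G⁺ □ H, (⋆, y))`.
Conversely `π_s(G⁺, ⋆) ≤ π_{2s}(G, x)`: if `a < s` pebbles start on `⋆`, count them as pebbles on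
`x`; since `a` extra pebbles raise what can be moved to `x` by at most `a`, the rest of the
distribution still brings `2s - a ≥ 2(s - a)` pebbles to `x`, enough to finish on `⋆`.
The hypothesis for `G⁺` and `H` then gives the first inequality; the second one comes from
attaching the pendant vertex to `y` in `H` instead, using `G □ H ≃ H □ G`.
-/

open SimpleGraph Relation

section Moves
variable {V : Type*} [DecidableEq V] {G : SimpleGraph V} {D D' : V → ℕ}

lemma unitDist_eq_single (t : ℕ) (v : V) : unitDist t v = Pi.single v t := by
  funext w
  simp [unitDist, Pi.single_apply]

-- Free of the truncated subtraction in `PebMove`, so moves can be pushed through additive maps.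
lemma pebMove_iff_add_single :
    PebMove G D D' ↔ ∃ u v, G.Adj u v ∧ D' + Pi.single u 2 = D + Pi.single v 1 := by
  constructor
  · rintro ⟨u, v, huv, hu, rfl⟩
    refine ⟨u, v, huv, funext fun w => ?_⟩
    have := huv.ne
    simp only [Pi.add_apply, Pi.single_apply]
    grind
  · rintro ⟨u, v, huv, h⟩
    have := huv.ne
    have hu := congrFun h u
    simp only [Pi.add_apply, Pi.single_apply] at hu
    refine ⟨u, v, huv, by split_ifs at hu <;> omega, funext fun w => ?_⟩
    have hw := congrFun h w
    simp only [Pi.add_apply, Pi.single_apply] at hw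
    grind

lemma PebMove.add_right (h : PebMove G D D') (C : V → ℕ) : PebMove G (D + C) (D' + C) := by
  obtain ⟨u, v, huv, h⟩ := pebMove_iff_add_single.1 h
  exact pebMove_iff_add_single.2 ⟨u, v, huv, by rw [add_right_comm, h, add_right_comm]⟩

lemma reflTransGen_pebMove_of_add_single {u v : V} (huv : G.Adj u v) :
    ∀ {D D' : V → ℕ} (k : ℕ), D' + Pi.single u (2 * k) = D + Pi.single v k →
      ReflTransGen (PebMove G) D D'
  | D, D', 0, h => by simp_all [ReflTransGen.refl]
  | D, D', k + 1, h => by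
    have hu := congrFun h u
    simp only [Pi.add_apply, Pi.single_eq_same, Pi.single_eq_of_ne huv.ne] at hu
    set D₁ := D + Pi.single v 1 - Pi.single u 2
    have hD₁ : D₁ + Pi.single u 2 = D + Pi.single v 1 := by
      refine tsub_add_cancel_of_le fun w => ?_
      simp only [Pi.add_apply, Pi.single_apply]
      grind
    refine .head (pebMove_iff_add_single.2 ⟨u, v, huv, hD₁⟩)
      (reflTransGen_pebMove_of_add_single huv k (add_right_cancel (b := Pi.single u 2) ?_))
    calc D' + Pi.single u (2 * k) + Pi.single u 2 = D + Pi.single v 1 + Pi.single v k := by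
          rw [add_assoc, add_assoc, ← Pi.single_add, ← Pi.single_add, add_comm 1, ← h,
            mul_add_one]
      _ = D₁ + Pi.single v k + Pi.single u 2 := by rw [← hD₁, add_right_comm]

end Moves

section Reaches
variable {V W : Type*} [DecidableEq V] [DecidableEq W] {G : SimpleGraph V} {D D' T T' : V → ℕ}

lemma Reaches.of_le (h : T ≤ D) : Reaches G D T := ⟨D, .refl, h⟩

lemma Reaches.mono (h : Reaches G D T) (hT : T' ≤ T) : Reaches G D T' :=
  let ⟨D'', hr, hle⟩ := h
  ⟨D'', hr, hT.trans hle⟩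

lemma Reaches.of_reflTransGen (h : ReflTransGen (PebMove G) D D') : Reaches G D D' :=
  ⟨D', h, fun _ => le_rfl⟩

lemma reaches_single_of_adj {u v : V} (huv : G.Adj u v) (k : ℕ) :
    Reaches G (Pi.single u (2 * k)) (Pi.single v k) :=
  .of_reflTransGen (reflTransGen_pebMove_of_add_single huv k (add_comm _ _))

lemma reflTransGen_pebMove_add_right (h : ReflTransGen (PebMove G) D D') (C : V → ℕ) :
    ReflTransGen (PebMove G) (D + C) (D' + C) :=
  h.lift (· + C) fun _ _ hm => hm.add_right C

lemma Reaches.add_right (h : Reaches G D T) (C : V → ℕ) : Reaches G (D + C) (T + C) :=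
  let ⟨D'', hr, hle⟩ := h
  ⟨D'' + C, reflTransGen_pebMove_add_right hr C, fun v => Nat.add_le_add_right (hle v) _⟩

lemma Reaches.trans (h₁ : Reaches G D T) (h₂ : Reaches G T T') : Reaches G D T' := by
  obtain ⟨D₁, hr₁, hT⟩ := h₁
  obtain ⟨T₁, hr₂, hT'⟩ := h₂
  have hr₂' := reflTransGen_pebMove_add_right hr₂ (D₁ - T)
  rw [add_tsub_cancel_of_le hT] at hr₂'
  exact ⟨T₁ + (D₁ - T), hr₁.trans hr₂', fun v => le_add_right (hT' v)⟩

lemma Reaches.map {G₂ : SimpleGraph W} {φ : (V → ℕ) → W → ℕ} (hφ : Monotone φ)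
    (hmove : ∀ A B, PebMove G A B → Reaches G₂ (φ A) (φ B)) (h : Reaches G D T) :
    Reaches G₂ (φ D) (φ T) := by
  obtain ⟨D'', hr, hT⟩ := h
  refine Reaches.mono ?_ (hφ hT)
  clear hT
  induction hr with
  | refl => exact .of_le le_rfl
  | tail _ hm ih => exact ih.trans (hmove _ _ hm)

-- If `E` cannot make the move, its source holds the spare pebble, which is then declared moved.
lemma PebMove.exists_reflTransGen_le_add_single {A B E : V → ℕ} {u : V} (hAB : PebMove G A B)
    (hA : A ≤ E + Pi.single u 1) :
    ∃ E' u', ReflTransGen (PebMove G) E E' ∧ B ≤ E' + Pi.single u' 1 := by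
  obtain ⟨p, q, hpq, hp, rfl⟩ := hAB
  have := hpq.ne
  have hAp := hA p
  have hAq := hA q
  simp only [Pi.add_apply, Pi.single_apply] at hAp hAq
  by_cases hE : 2 ≤ E p
  · refine ⟨_, u, .single ⟨p, q, hpq, hE, rfl⟩, fun w => ?_⟩
    have hAw := hA w
    simp only [Pi.add_apply, Pi.single_apply] at hAw ⊢
    grind
  · refine ⟨E, q, .refl, fun w => ?_⟩
    have hAw := hA w
    simp only [Pi.add_apply, Pi.single_apply] at hAw ⊢
    grind

lemma exists_reflTransGen_le_add_single {D'' E : V → ℕ} {u : V}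
    (h : ReflTransGen (PebMove G) D D'') (hD : D ≤ E + Pi.single u 1) :
    ∃ E' u', ReflTransGen (PebMove G) E E' ∧ D'' ≤ E' + Pi.single u' 1 := by
  induction h with
  | refl => exact ⟨E, u, .refl, hD⟩
  | tail _ hm ih =>
    obtain ⟨E₁, u₁, hr₁, hle₁⟩ := ih
    obtain ⟨E₂, u₂, hr₂, hle₂⟩ := hm.exists_reflTransGen_le_add_single hle₁
    exact ⟨E₂, u₂, hr₁.trans hr₂, hle₂⟩

lemma Reaches.of_add_single_one {u x : V} {k : ℕ}
    (h : Reaches G (D + Pi.single u 1) (Pi.single x k)) : Reaches G D (Pi.single x (k - 1)) := by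
  obtain ⟨D'', hr, hk⟩ := h
  obtain ⟨E', u', hr', hle⟩ := exists_reflTransGen_le_add_single hr le_rfl
  refine ⟨E', hr', fun w => ?_⟩
  have hw := le_trans (hk w) (hle w)
  simp only [Pi.add_apply, Pi.single_apply] at hw ⊢
  split_ifs at hw ⊢ <;> omega

lemma Reaches.of_add_single {u x : V} {k : ℕ} :
    ∀ {D : V → ℕ} (a : ℕ), Reaches G (D + Pi.single u a) (Pi.single x k) →
      Reaches G D (Pi.single x (k - a))
  | D, 0, h => by simpa using h
  | D, a + 1, h => by
    rw [Pi.single_add, ← add_assoc, add_right_comm] at h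
    simpa [Nat.sub_sub] using (Reaches.of_add_single a h).of_add_single_one

lemma peb_le_of_lift [Fintype V] [Fintype W] {G₂ : SimpleGraph W} {T₂ : W → ℕ}
    (lift : (W → ℕ) → V → ℕ) (htotal : ∀ E, pebTotal E ≤ pebTotal (lift E))
    (hreach : ∀ E, Reaches G (lift E) T → Reaches G₂ E T₂) : peb G₂ T₂ ≤ peb G T := by
  refine sInf_le_sInf fun N hN => ?_
  simp only [Set.mem_ofPred_eq, Set.mem_singleton_iff] at hN ⊢
  rintro E hE _ rfl
  exact hreach E (hN (lift E) (hE.trans (by exact_mod_cast htotal E)) _ rfl)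

end Reaches

section Pendant
variable {V : Type*} {G : SimpleGraph V} {x : V}

def pendant (G : SimpleGraph V) (x : V) : SimpleGraph (Option V) :=
  G.map some ⊔ edge (some x) none

@[simp] lemma pendant_adj_some_some {a b : V} :
    (pendant G x).Adj (some a) (some b) ↔ G.Adj a b := by
  simpa [pendant, edge_adj, map_adj'] using @Adj.ne _ G a b

@[simp] lemma pendant_adj_some_none {a : V} : (pendant G x).Adj (some a) none ↔ a = x := by
  simp [pendant, edge_adj, map_adj']

@[simp] lemma pendant_adj_none_some {a : V} : (pendant G x).Adj none (some a) ↔ a = x := by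
  simp [pendant, edge_adj, map_adj']

end Pendant

section PendantPebbling
variable {V : Type*} [DecidableEq V] {G : SimpleGraph V} {x : V}

lemma PebMove.pendant_elim' {A B : V → ℕ} (h : PebMove G A B) (a : ℕ) :
    PebMove (pendant G x) (Option.elim' a A) (Option.elim' a B) := by
  obtain ⟨u, v, huv, h⟩ := pebMove_iff_add_single.1 h
  refine pebMove_iff_add_single.2 ⟨some u, some v, by simpa using huv, funext fun o => ?_⟩
  cases o with
  | none => simp
  | some w => simpa [Pi.single_apply] using congrFun h w

lemma peb_pendant_le [Fintype V] (G : SimpleGraph V) (x : V) (s : ℕ) :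
    peb (pendant G x) (Pi.single none s) ≤ peb G (Pi.single x (2 * s)) := by
  refine peb_le_of_lift (fun E => E ∘ some + Pi.single x (E none)) (fun E => le_of_eq ?_)
    fun E h => ?_
  · simp [pebTotal, Fintype.sum_option, Finset.sum_add_distrib, add_comm]
  set a := E none
  by_cases has : s ≤ a
  · exact .of_le fun o => by cases o <;> simp [has, a]
  have hlift : Reaches (pendant G x) E (Pi.single (some x) (2 * s - a) + Pi.single none a) := by
    have := (h.of_add_single a).map (G₂ := pendant G x) (φ := Option.elim' a)
      (fun _ _ hle o => by cases o <;> simp [hle _])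
      (fun _ _ hm => .of_reflTransGen (.single (hm.pendant_elim' a)))
    convert this using 1 <;> funext o <;> cases o <;> simp [a, Pi.single_apply]
  have hpump : Reaches (pendant G x) (Pi.single (some x) (2 * (s - a)) + Pi.single none a)
      (Pi.single none s) := by
    have hsa : s - a + a = s := by omega
    simpa [← Pi.single_add, hsa] using
      (reaches_single_of_adj (G := pendant G x) (pendant_adj_some_none.2 rfl)
        (s - a)).add_right (Pi.single none a)
  exact hlift.trans
    ((Reaches.of_le (add_le_add_left (Pi.single_le_single.2 (by omega)) _)).trans hpump)

end PendantPebbling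

section PendantProduct
variable {V W : Type*} [DecidableEq V] {G : SimpleGraph V} {H : SimpleGraph W} {x : V}

def foldPendant (x : V) (D : Option V × W → ℕ) : V × W → ℕ :=
  fun p => D (some p.1, p.2) + if p.1 = x then 2 * D (none, p.2) else 0

lemma foldPendant_add (A B : Option V × W → ℕ) :
    foldPendant x (A + B) = foldPendant x A + foldPendant x B := by
  funext p
  simp only [foldPendant, Pi.add_apply]
  split_ifs <;> ring

lemma foldPendant_mono : Monotone (foldPendant (W := W) x) := fun A B hAB p =>
  add_le_add (hAB _) (by split_ifs <;> simp [hAB _])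

variable [DecidableEq W]

lemma foldPendant_single_some (g : V) (h : W) (k : ℕ) :
    foldPendant x (Pi.single (some g, h) k) = Pi.single (g, h) k := by
  funext p
  simp [foldPendant, Pi.single_apply, Prod.ext_iff]

lemma foldPendant_single_none (h : W) (k : ℕ) :
    foldPendant x (Pi.single (none, h) k) = Pi.single (x, h) (2 * k) := by
  funext p
  simp only [foldPendant, Pi.single_apply, Prod.ext_iff]
  split_ifs <;> simp_all

lemma PebMove.reaches_foldPendant {A B : Option V × W → ℕ}
    (hm : PebMove (pendant G x □ H) A B) :
    Reaches (G □ H) (foldPendant x A) (foldPendant x B) := by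
  obtain ⟨⟨p₁, p₂⟩, ⟨q₁, q₂⟩, hpq, h⟩ := pebMove_iff_add_single.1 hm
  have h' := congrArg (foldPendant x) h
  rw [foldPendant_add, foldPendant_add] at h'
  rw [boxProd_adj] at hpq
  cases p₁ <;> cases q₁ <;> simp only [foldPendant_single_some, foldPendant_single_none] at h'
  case none.none =>
    have hxx : (G □ H).Adj (x, p₂) (x, q₂) := by simpa using hpq
    exact .of_reflTransGen (reflTransGen_pebMove_of_add_single hxx 2 h')
  case none.some g =>
    obtain ⟨rfl, rfl⟩ : g = x ∧ p₂ = q₂ := by simpa [eq_comm] using hpq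
    refine .of_le fun w => ?_
    have hw := congrFun h' w
    simp only [Pi.add_apply, Pi.single_apply] at hw
    beta_reduce
    split_ifs at hw <;> omega
  case some.none g =>
    obtain ⟨rfl, rfl⟩ : g = x ∧ p₂ = q₂ := by simpa using hpq
    exact .of_le (add_right_cancel h').le
  case some.some g g' =>
    have hgg : (G □ H).Adj (g, p₂) (g', q₂) := by simpa using hpq
    exact .of_reflTransGen (.single (pebMove_iff_add_single.2 ⟨_, _, hgg, h'⟩))

lemma peb_boxProd_le_peb_pendant_boxProd [Fintype V] [Fintype W] (G : SimpleGraph V)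
    (H : SimpleGraph W) (x : V) (y : W) (m : ℕ) :
    peb (G □ H) (Pi.single (x, y) (2 * m)) ≤ peb (pendant G x □ H) (Pi.single (none, y) m) := by
  refine peb_le_of_lift (fun E p => Option.elim' 0 (fun g => E (g, p.2)) p.1)
    (fun E => le_of_eq ?_) fun E h => ?_
  · simp [pebTotal, Fintype.sum_prod_type, Fintype.sum_option]
  have := h.map (foldPendant_mono (x := x)) fun _ _ hm => hm.reaches_foldPendant
  rw [foldPendant_single_none] at this
  convert this using 1
  funext p
  simp [foldPendant]

end PendantProduct

section Iso
variable {V W : Type*} [DecidableEq V] [DecidableEq W] [Fintype V] [Fintype W]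
  {G : SimpleGraph V} {G₂ : SimpleGraph W}

lemma peb_single_le_of_iso (e : G ≃g G₂) (v : V) (k : ℕ) :
    peb G₂ (Pi.single (e v) k) ≤ peb G (Pi.single v k) := by
  have hcomp : ∀ (u : V) (k : ℕ), Pi.single u k ∘ e.symm = Pi.single (e u) k := fun u k => by
    funext w
    simp [Pi.single_apply, e.symm_apply_eq]
  refine peb_le_of_lift (· ∘ e) (fun E => (Equiv.sum_comp e.toEquiv E).ge) fun E h => ?_
  have := h.map (φ := (· ∘ e.symm)) (fun _ _ h w => h _) fun A B hm => by
    obtain ⟨u, v, huv, h⟩ := pebMove_iff_add_single.1 hm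
    refine .of_reflTransGen
      (.single (pebMove_iff_add_single.2 ⟨e u, e v, e.map_adj_iff.2 huv, ?_⟩))
    rw [← hcomp, ← hcomp, ← Pi.add_comp, ← Pi.add_comp, h]
  rw [hcomp] at this
  simpa [Function.comp_def] using this

end Iso

lemma peb_boxProd_le_peb_boxProd_pendant {V W : Type*} [DecidableEq V] [DecidableEq W]
    [Fintype V] [Fintype W] (G : SimpleGraph V) (H : SimpleGraph W) (x : V) (y : W)
    (m : ℕ) :
    peb (G □ H) (Pi.single (x, y) (2 * m)) ≤ peb (G □ pendant H y) (Pi.single (x, none) m) :=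
  calc peb (G □ H) (Pi.single (x, y) (2 * m))
      ≤ peb (H □ G) (Pi.single (y, x) (2 * m)) := peb_single_le_of_iso (boxProdComm H G) _ _
    _ ≤ peb (pendant H y □ G) (Pi.single (none, x) m) :=
      peb_boxProd_le_peb_pendant_boxProd H G y x m
    _ ≤ peb (G □ pendant H y) (Pi.single (x, none) m) :=
      peb_single_le_of_iso (boxProdComm G (pendant H y)) _ _

open SimpleGraph in
theorem doubling_general (s t : ℕ)
    (h : ∀ (V W : Type) [Fintype V] [DecidableEq V] [Fintype W] [DecidableEq W]
        (G : SimpleGraph V) (H : SimpleGraph W) (x : V) (y : W),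
        peb (G □ H) (unitDist (s * t) (x, y))
          ≤ peb G (unitDist s x) * peb H (unitDist t y)) :
    ∀ (V W : Type) [Fintype V] [DecidableEq V] [Fintype W] [DecidableEq W]
        (G : SimpleGraph V) (H : SimpleGraph W) (x : V) (y : W),
        peb (G □ H) (unitDist (2 * (s * t)) (x, y))
            ≤ peb G (unitDist (2 * s) x) * peb H (unitDist t y) ∧
        peb (G □ H) (unitDist (2 * (s * t)) (x, y))
            ≤ peb G (unitDist s x) * peb H (unitDist (2 * t) y) := by
  simp only [unitDist_eq_single] at h ⊢
  intro V W _ _ _ _ G H x y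
  constructor
  · calc peb (G □ H) (Pi.single (x, y) (2 * (s * t)))
        ≤ peb (pendant G x □ H) (Pi.single (none, y) (s * t)) :=
          peb_boxProd_le_peb_pendant_boxProd G H x y _
      _ ≤ peb (pendant G x) (Pi.single none s) * peb H (Pi.single y t) := h _ _ _ _ _ _
      _ ≤ peb G (Pi.single x (2 * s)) * peb H (Pi.single y t) :=
          mul_le_mul' (peb_pendant_le G x s) le_rfl
  · calc peb (G □ H) (Pi.single (x, y) (2 * (s * t)))
        ≤ peb (G □ pendant H y) (Pi.single (x, none) (s * t)) :=
          peb_boxProd_le_peb_boxProd_pendant G H x y _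
      _ ≤ peb G (Pi.single x s) * peb (pendant H y) (Pi.single none t) := h _ _ _ _ _ _
      _ ≤ peb G (Pi.single x s) * peb H (Pi.single y (2 * t)) :=
          mul_le_mul' le_rfl (peb_pendant_le H y t)

open SimpleGraph in
/-- Doubling: if the `(s,t)` Graham inequality for target vertices holds for all
graphs, then so do the `(2s,t)` and `(s,2t)` inequalities. -/
theorem doubling (s t : ℕ) (hs : 0 < s) (ht : 0 < t)
    (h : ∀ (V W : Type) [Fintype V] [DecidableEq V] [Fintype W] [DecidableEq W]
        (G : SimpleGraph V) (H : SimpleGraph W) (x : V) (y : W),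
        peb (G □ H) (unitDist (s * t) (x, y))
          ≤ peb G (unitDist s x) * peb H (unitDist t y)) :
    ∀ (V W : Type) [Fintype V] [DecidableEq V] [Fintype W] [DecidableEq W]
        (G : SimpleGraph V) (H : SimpleGraph W) (x : V) (y : W),
        peb (G □ H) (unitDist (2 * (s * t)) (x, y))
            ≤ peb G (unitDist (2 * s) x) * peb H (unitDist t y) ∧
        peb (G □ H) (unitDist (2 * (s * t)) (x, y))
            ≤ peb G (unitDist s x) * peb H (unitDist (2 * t) y) :=
  doubling_general s t h
end

section
/- Let G and H be weighted graphs, let x_i ∈ V(G), let s be a positive integer, and let G_{i,s}' and the map π from distributions on G_{i,s}' × H to distributions on G × H be as defined. If D_0 and D_n are distributions on G_{i,s}' × H such that D_n is reachable from D_0 in G_{i,s}' × H, then some distribution containing π(D_n) is reachable from π(D_0) in G × H. -/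
open scoped BigOperators

/-- A weighted graph: a finite simple graph together with a symmetric weight
function assigning a positive integer to each edge. -/
structure WeightedGraph (V : Type*) where
  toSimpleGraph : SimpleGraph V
  w : V → V → ℕ
  w_symm : ∀ u v, w u v = w v u
  w_pos : ∀ u v, toSimpleGraph.Adj u v → 0 < w u v

/-- A weighted pebbling move along the edge `(u, v)`: remove `w u v` pebbles
from `u` and add one pebble on the adjacent vertex `v`. -/
def WPebMove {V : Type*} [DecidableEq V] (G : WeightedGraph V) (D D' : V → ℕ) : Prop :=
  ∃ u v, G.toSimpleGraph.Adj u v ∧ G.w u v ≤ D u ∧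
    D' = fun z => if z = u then D u - G.w u v else if z = v then D v + 1 else D z

/-- `D'` is reachable from `D` in the weighted graph `G`: some sequence of
weighted pebbling moves starting at `D` produces a distribution containing `D'`. -/
def WReaches {V : Type*} [DecidableEq V] (G : WeightedGraph V) (D D' : V → ℕ) : Prop :=
  ∃ D'', Relation.ReflTransGen (WPebMove G) D D'' ∧ ∀ v, D' v ≤ D'' v

/-- The weighted pebbling number of a set `S` of target distributions. -/
noncomputable def wpebSet {V : Type*} [Fintype V] [DecidableEq V] (G : WeightedGraph V)
    (S : Set (V → ℕ)) : ℕ∞ :=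
  sInf {N : ℕ∞ | ∀ D₀ : V → ℕ, N ≤ (pebTotal D₀ : ℕ∞) → ∀ D ∈ S, WReaches G D₀ D}

/-- The weighted pebbling number of a single target distribution. -/
noncomputable def wpeb {V : Type*} [Fintype V] [DecidableEq V] (G : WeightedGraph V)
    (D : V → ℕ) : ℕ∞ :=
  wpebSet G {D}

open SimpleGraph in
/-- The Cartesian product of two weighted graphs. -/
def WeightedGraph.boxProd {V W : Type*} [DecidableEq V]
    (G : WeightedGraph V) (H : WeightedGraph W) : WeightedGraph (V × W) where
  toSimpleGraph := G.toSimpleGraph □ H.toSimpleGraph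
  w := fun p q => if p.1 = q.1 then H.w p.2 q.2 else G.w p.1 q.1
  w_symm := by
    intro p q
    show (if p.1 = q.1 then H.w p.2 q.2 else G.w p.1 q.1)
        = (if q.1 = p.1 then H.w q.2 p.2 else G.w q.1 p.1)
    by_cases h : p.1 = q.1
    · rw [if_pos h, if_pos h.symm, H.w_symm]
    · rw [if_neg h, if_neg (fun hh => h hh.symm), G.w_symm]
  w_pos := by
    intro p q hpq
    rcases (SimpleGraph.boxProd_adj).mp hpq with ⟨hadj, _⟩ | ⟨hadj, heq⟩
    · have hne : p.1 ≠ q.1 := hadj.ne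
      simpa [hne] using G.w_pos _ _ hadj
    · simpa [heq] using H.w_pos _ _ hadj

/-- The weighted graph `G_{i,s}'` obtained from `G` by adding a single new
vertex `none` joined to `xᵢ` by a single edge of weight `s`. -/
def WeightedGraph.extend {V : Type*} (G : WeightedGraph V) (xi : V)
    (s : ℕ) (hs : 0 < s) : WeightedGraph (Option V) where
  toSimpleGraph :=
    { Adj := fun a b =>
        (∃ u v, a = some u ∧ b = some v ∧ G.toSimpleGraph.Adj u v) ∨
        (a = some xi ∧ b = none) ∨ (a = none ∧ b = some xi)
      symm := by
        constructor
        rintro a b (⟨u, v, rfl, rfl, h⟩ | ⟨rfl, rfl⟩ | ⟨rfl, rfl⟩)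
        · exact Or.inl ⟨v, u, rfl, rfl, h.symm⟩
        · exact Or.inr (Or.inr ⟨rfl, rfl⟩)
        · exact Or.inr (Or.inl ⟨rfl, rfl⟩)
      loopless := by
        constructor
        rintro a (⟨u, v, rfl, h1, hadj⟩ | ⟨h1, h2⟩ | ⟨h1, h2⟩) <;> simp_all }
  w := fun a b => match a, b with
    | some u, some v => G.w u v
    | _, _ => s
  w_symm := by
    rintro (_ | u) (_ | v) <;> simp [G.w_symm]
  w_pos := by
    rintro a b (⟨u, v, rfl, rfl, hadj⟩ | ⟨rfl, rfl⟩ | ⟨rfl, rfl⟩)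
    · exact G.w_pos u v hadj
    · exact hs
    · exact hs

/-- The map `π` sending a distribution on `G_{i,s}' × H` to a distribution on
`G × H`, replacing each pebble on `(x', y)` by `s` pebbles on `(xᵢ, y)`. -/
def wprojDist {V W : Type*} [DecidableEq V] (xi : V) (s : ℕ)
    (D : Option V × W → ℕ) : V × W → ℕ :=
  fun p =>
    if p.1 = xi then D (some p.1, p.2) + s * D (none, p.2) else D (some p.1, p.2)

/-!
`π` is additive, and a move `D → D'` along `(u, v)` is the equation `D' + w·δᵤ = D + δᵥ`;
applying `π` gives `π D' + w·π δᵤ = π D + π δᵥ`, where `π δ_(x', y) = s·δ_(xᵢ, y)`.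
So a move between two vertices of `G × H` is the same move there, a move across the pendant
edge does not increase `π` (it trades `s` pebbles for `s`, or `s²` for one), and a move along
an `H`-edge at `x'` is simulated by `s` moves along the same `H`-edge at `xᵢ`. Since
reachability is monotone in the starting distribution, these simulations compose.
-/

theorem Pi.single_le_iff_le_apply {ι α : Type*} [DecidableEq ι] [AddCommMonoid α]
    [PartialOrder α] [CanonicallyOrderedAdd α] {f : ι → α} {i : ι} {a : α} :
    Pi.single i a ≤ f ↔ a ≤ f i := by
  refine ⟨fun h => by simpa using h i, fun h j => ?_⟩
  rcases eq_or_ne j i with rfl | hj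
  · simpa using h
  · simp [hj]

section Reachability

variable {V : Type*} [DecidableEq V] {G : WeightedGraph V}

theorem wpebMove_iff_add_single {D D' : V → ℕ} :
    WPebMove G D D' ↔ ∃ u v, G.toSimpleGraph.Adj u v ∧ G.w u v ≤ D u ∧
      D' + Pi.single u (G.w u v) = D + Pi.single v 1 := by
  constructor
  · rintro ⟨u, v, hadj, hle, rfl⟩
    refine ⟨u, v, hadj, hle, funext fun z => ?_⟩
    have := hadj.ne
    simp only [Pi.add_apply, Pi.single_apply]
    split_ifs <;> grind
  · rintro ⟨u, v, hadj, hle, hD⟩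
    refine ⟨u, v, hadj, hle, funext fun z => ?_⟩
    have := hadj.ne
    have hz := congrFun hD z
    simp only [Pi.add_apply, Pi.single_apply] at hz
    split_ifs at hz ⊢ <;> grind

theorem WPebMove.exists_le_of_le {D D' E : V → ℕ} (h : WPebMove G D D') (hDE : D ≤ E) :
    ∃ E', WPebMove G E E' ∧ D' ≤ E' := by
  obtain ⟨u, v, hadj, hle, hD⟩ := wpebMove_iff_add_single.1 h
  refine ⟨D' + (E - D), wpebMove_iff_add_single.2 ⟨u, v, hadj, hle.trans (hDE u), ?_⟩,
    le_self_add⟩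
  rw [add_right_comm, hD, add_right_comm, add_tsub_cancel_of_le hDE]

theorem exists_reflTransGen_le_of_le {D D' E : V → ℕ}
    (h : Relation.ReflTransGen (WPebMove G) D D') (hDE : D ≤ E) :
    ∃ E', Relation.ReflTransGen (WPebMove G) E E' ∧ D' ≤ E' := by
  induction h with
  | refl => exact ⟨E, .refl, hDE⟩
  | tail _ hmove ih =>
    obtain ⟨E', hE', hle⟩ := ih
    obtain ⟨E'', hmove', hle'⟩ := hmove.exists_le_of_le hle
    exact ⟨E'', hE'.tail hmove', hle'⟩

theorem WReaches.of_le {D E : V → ℕ} (h : E ≤ D) : WReaches G D E :=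
  ⟨D, .refl, h⟩

theorem WReaches.trans {D₁ D₂ D₃ : V → ℕ} (h₁₂ : WReaches G D₁ D₂) (h₂₃ : WReaches G D₂ D₃) :
    WReaches G D₁ D₃ := by
  obtain ⟨A, hA, hA₂⟩ := h₁₂
  obtain ⟨B, hB, hB₃⟩ := h₂₃
  obtain ⟨B', hB', hBB'⟩ := exists_reflTransGen_le_of_le hB hA₂
  exact ⟨B', hA.trans hB', fun v => (hB₃ v).trans (hBB' v)⟩

theorem WReaches.of_add_single_le {u v : V} (hadj : G.toSimpleGraph.Adj u v) (k : ℕ)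
    {D E : V → ℕ} (hk : k * G.w u v ≤ D u)
    (hE : E + Pi.single u (k * G.w u v) ≤ D + Pi.single v k) : WReaches G D E := by
  induction k generalizing D with
  | zero => simpa using WReaches.of_le (G := G) hE
  | succ k ih =>
    have hw : G.w u v ≤ D u := (Nat.le_mul_of_pos_left _ k.succ_pos).trans hk
    set D₁ := D + Pi.single v 1 - Pi.single u (G.w u v)
    have hD₁ : D₁ + Pi.single u (G.w u v) = D + Pi.single v 1 :=
      tsub_add_cancel_of_le (le_add_right (Pi.single_le_iff_le_apply.2 hw))
    have hmove : WPebMove G D D₁ := wpebMove_iff_add_single.2 ⟨u, v, hadj, hw, hD₁⟩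
    refine WReaches.trans ⟨D₁, .single hmove, fun _ => le_rfl⟩ (ih ?_ ?_)
    · have hD₁u : D₁ u + G.w u v = D u := by simpa [hadj.ne] using congrFun hD₁ u
      rw [add_one_mul] at hk
      omega
    · refine le_of_add_le_add_right (a := Pi.single u (G.w u v)) ?_
      calc E + Pi.single u (k * G.w u v) + Pi.single u (G.w u v)
          = E + Pi.single u ((k + 1) * G.w u v) := by rw [add_assoc, ← Pi.single_add, add_one_mul]
        _ ≤ D + Pi.single v (k + 1) := hE
        _ = D₁ + Pi.single v k + Pi.single u (G.w u v) := by
          rw [add_right_comm, hD₁, Pi.single_add]; abel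

end Reachability

section Projection

variable {V W : Type*} [DecidableEq V] {xi : V} {s : ℕ}

theorem wprojDist_add (D E : Option V × W → ℕ) :
    wprojDist xi s (D + E) = wprojDist xi s D + wprojDist xi s E := by
  funext p
  simp only [wprojDist, Pi.add_apply]
  split_ifs <;> ring

theorem wprojDist_mono {D E : Option V × W → ℕ} (h : D ≤ E) :
    wprojDist xi s D ≤ wprojDist xi s E := by
  intro p
  simp only [wprojDist]
  split_ifs
  · exact add_le_add (h _) (Nat.mul_le_mul_left s (h _))
  · exact h _

theorem wprojDist_single_some [DecidableEq W] (a : V) (y : W) (c : ℕ) :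
    wprojDist xi s (Pi.single (some a, y) c) = Pi.single (a, y) c := by
  funext p
  simp [wprojDist, Pi.single_apply, Prod.ext_iff]

theorem wprojDist_single_none [DecidableEq W] (y : W) (c : ℕ) :
    wprojDist xi s (Pi.single (none, y) c) = Pi.single (xi, y) (s * c) := by
  funext p
  simp [wprojDist, Pi.single_apply, Prod.ext_iff, ite_and]

theorem apply_some_le_wprojDist (D : Option V × W → ℕ) (a : V) (y : W) :
    D (some a, y) ≤ wprojDist xi s D (a, y) := by
  simp only [wprojDist]
  split_ifs
  exacts [le_self_add, le_rfl]

theorem mul_apply_none_le_wprojDist (D : Option V × W → ℕ) (y : W) :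
    s * D (none, y) ≤ wprojDist xi s D (xi, y) := by
  simp [wprojDist]

end Projection

namespace WeightedGraph

variable {V W : Type*} [DecidableEq V] (G : WeightedGraph V) (H : WeightedGraph W)
  (xi : V) {s : ℕ} (hs : 0 < s) {y y' : W}

theorem boxProd_w_of_fst_eq (x : V) : (G.boxProd H).w (x, y) (x, y') = H.w y y' :=
  if_pos rfl

theorem extend_boxProd_adj_some_some {a b : V} :
    ((G.extend xi s hs).boxProd H).toSimpleGraph.Adj (some a, y) (some b, y') ↔
      (G.boxProd H).toSimpleGraph.Adj (a, y) (b, y') := by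
  simp [boxProd, extend, SimpleGraph.boxProd_adj]

theorem extend_boxProd_adj_some_none {a : V} :
    ((G.extend xi s hs).boxProd H).toSimpleGraph.Adj (some a, y) (none, y') ↔
      a = xi ∧ y = y' := by
  simp [boxProd, extend, SimpleGraph.boxProd_adj]

theorem extend_boxProd_adj_none_some {b : V} :
    ((G.extend xi s hs).boxProd H).toSimpleGraph.Adj (none, y) (some b, y') ↔
      b = xi ∧ y = y' := by
  simp [boxProd, extend, SimpleGraph.boxProd_adj]

theorem extend_boxProd_adj_none_none :
    ((G.extend xi s hs).boxProd H).toSimpleGraph.Adj (none, y) (none, y') ↔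
      H.toSimpleGraph.Adj y y' := by
  simp [boxProd, extend, SimpleGraph.boxProd_adj]

theorem extend_boxProd_w_some_some (a b : V) :
    ((G.extend xi s hs).boxProd H).w (some a, y) (some b, y') =
      (G.boxProd H).w (a, y) (b, y') := by
  simp [boxProd, extend]

theorem extend_boxProd_w_some_none (a : V) :
    ((G.extend xi s hs).boxProd H).w (some a, y) (none, y') = s := by
  simp [boxProd, extend]

theorem extend_boxProd_w_none_some (b : V) :
    ((G.extend xi s hs).boxProd H).w (none, y) (some b, y') = s := by
  simp [boxProd, extend]

end WeightedGraph

open WeightedGraph in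
theorem wReaches_wprojDist_of_wpebMove {V W : Type*} [DecidableEq V] [DecidableEq W]
    {G : WeightedGraph V} {H : WeightedGraph W} {xi : V} {s : ℕ} {hs : 0 < s}
    {D D' : Option V × W → ℕ} (h : WPebMove ((G.extend xi s hs).boxProd H) D D') :
    WReaches (G.boxProd H) (wprojDist xi s D) (wprojDist xi s D') := by
  obtain ⟨⟨a, y⟩, ⟨b, y'⟩, hadj, hle, hD⟩ := wpebMove_iff_add_single.1 h
  have hπ := congrArg (wprojDist xi s) hD
  rw [wprojDist_add, wprojDist_add] at hπ
  cases a with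
  | none =>
    cases b with
    | none =>
      rw [extend_boxProd_adj_none_none] at hadj
      rw [boxProd_w_of_fst_eq] at hle hπ
      rw [wprojDist_single_none, wprojDist_single_none, mul_one] at hπ
      refine WReaches.of_add_single_le (SimpleGraph.boxProd_adj_right (a := xi) |>.2 hadj) s ?_ ?_
      · rw [boxProd_w_of_fst_eq]
        exact (Nat.mul_le_mul_left s hle).trans (mul_apply_none_le_wprojDist D y)
      · rw [boxProd_w_of_fst_eq, hπ]
    | some b =>
      obtain ⟨hb, rfl⟩ := (extend_boxProd_adj_none_some G H xi hs).1 hadj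
      subst b
      rw [extend_boxProd_w_none_some, wprojDist_single_none, wprojDist_single_some] at hπ
      refine WReaches.of_le (le_of_add_le_add_right (a := Pi.single (xi, y) 1) ?_)
      calc wprojDist xi s D' + Pi.single (xi, y) 1
          ≤ wprojDist xi s D' + Pi.single (xi, y) (s * s) := by
            gcongr
            exact Nat.mul_le_mul hs hs
        _ = _ := hπ
  | some a =>
    cases b with
    | none =>
      obtain ⟨rfl, rfl⟩ := (extend_boxProd_adj_some_none G H xi hs).1 hadj
      rw [extend_boxProd_w_some_none, wprojDist_single_none, wprojDist_single_some,
        mul_one, add_left_inj] at hπ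
      exact WReaches.of_le hπ.le
    | some b =>
      rw [extend_boxProd_adj_some_some] at hadj
      rw [extend_boxProd_w_some_some] at hle hπ
      rw [wprojDist_single_some, wprojDist_single_some] at hπ
      exact WReaches.of_add_single_le hadj 1
        (by simpa using hle.trans (apply_some_le_wprojDist D a y)) (by simpa using hπ.le)

theorem wReaches_wprojDist_of_reflTransGen {V W : Type*} [DecidableEq V] [DecidableEq W]
    {G : WeightedGraph V} {H : WeightedGraph W} {xi : V} {s : ℕ} {hs : 0 < s}
    {D D' : Option V × W → ℕ}
    (h : Relation.ReflTransGen (WPebMove ((G.extend xi s hs).boxProd H)) D D') :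
    WReaches (G.boxProd H) (wprojDist xi s D) (wprojDist xi s D') := by
  induction h with
  | refl => exact WReaches.of_le le_rfl
  | tail _ hmove ih => exact ih.trans (wReaches_wprojDist_of_wpebMove hmove)

/-- If `Dₙ` is reachable from `D₀` in `G_{i,s}' × H`, then a distribution
containing `π(Dₙ)` is reachable from `π(D₀)` in `G × H`. -/
theorem weighted_pulling_back {V W : Type*} [DecidableEq V] [DecidableEq W]
    (G : WeightedGraph V) (H : WeightedGraph W) (xi : V) (s : ℕ) (hs : 0 < s)
    (D₀ Dₙ : Option V × W → ℕ)
    (h : WReaches ((G.extend xi s hs).boxProd H) D₀ Dₙ) :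
    WReaches (G.boxProd H) (wprojDist xi s D₀) (wprojDist xi s Dₙ) := by
  obtain ⟨D, hpath, hle⟩ := h
  exact (wReaches_wprojDist_of_reflTransGen hpath).trans (WReaches.of_le (wprojDist_mono hle))
end
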